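/- Let μ > 0 and a > 0, and let h be defined on the interval (−arctan a, arctan a) by h(ψ) = μ·[√(a²+1)·arctan(√(a²+1)·tan ψ / √(a² − tan²ψ)) − arctan(tan ψ / √(a² − tan²ψ))]. Then h is differentiable on (−arctan a, arctan a) with derivative h'(ψ) = μ·√(a² − tan²ψ) for every ψ ∈ (−arctan a, arctan a). -/

import Mathlib

open Real

/-- The antiderivative `h(ψ) = μ·[√(a²+1)·arctan(√(a²+1)·tan ψ / √(a² − tan²ψ))
− arctan(tan ψ / √(a² − tan²ψ))]`. -/
noncomputable def hFun (μ a ψ : ℝ) : ℝ :=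
  μ * (Real.sqrt (a ^ 2 + 1) *
        Real.arctan (Real.sqrt (a ^ 2 + 1) * Real.tan ψ / Real.sqrt (a ^ 2 - Real.tan ψ ^ 2))
      - Real.arctan (Real.tan ψ / Real.sqrt (a ^ 2 - Real.tan ψ ^ 2)))

/-! With `t = tan ψ` and `s = √(a² − t²)`, the map `u ↦ arctan (c u / √(a² − u²))` has
derivative `c a² / (s (a² − t² + c² t²))`. For `c = √(a² + 1)` the denominator factors as
`s a² (1 + t²)`, so the bracket in `h` has derivative
`((a² + 1) − (1 + t²)) / (s (1 + t²)) = s / (1 + t²)` in `t`, and the factor `1 + t²` is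
cancelled by `tan' = 1 + tan²`. -/

open Set

lemma mem_Ioo_neg_pi_div_two_of_mem_Ioo_arctan {a ψ : ℝ}
    (hψ : ψ ∈ Ioo (-arctan a) (arctan a)) : ψ ∈ Ioo (-(π / 2)) (π / 2) :=
  ⟨by linarith [hψ.1, arctan_lt_pi_div_two a], hψ.2.trans (arctan_lt_pi_div_two a)⟩

lemma sq_tan_lt_sq_of_mem_Ioo_arctan {a ψ : ℝ} (hψ : ψ ∈ Ioo (-arctan a) (arctan a)) :
    tan ψ ^ 2 < a ^ 2 := by
  obtain ⟨hlo, hhi⟩ := mem_Ioo_neg_pi_div_two_of_mem_Ioo_arctan hψ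
  rw [← arctan_tan hlo hhi, ← arctan_neg] at hψ
  exact sq_lt_sq' (arctan_lt_arctan_iff.mp hψ.1) (arctan_lt_arctan_iff.mp hψ.2)

lemma hasDerivAt_tan_one_add_tan_sq {x : ℝ} (hx : x ∈ Ioo (-(π / 2)) (π / 2)) :
    HasDerivAt tan (1 + tan x ^ 2) x := by
  have hcos : cos x ≠ 0 := (cos_pos_of_mem_Ioo hx).ne'
  simpa only [one_div, ← inv_one_add_tan_sq hcos, inv_inv] using hasDerivAt_tan hcos

lemma hasDerivAt_arctan_mul_div_sqrt_sq_sub_sq {a c t : ℝ} (ht : t ^ 2 < a ^ 2) :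
    HasDerivAt (fun u ↦ arctan (c * u / √(a ^ 2 - u ^ 2)))
      (c * a ^ 2 / (√(a ^ 2 - t ^ 2) * (a ^ 2 - t ^ 2 + c ^ 2 * t ^ 2))) t := by
  have hpos : 0 < a ^ 2 - t ^ 2 := sub_pos.mpr ht
  have hs : 0 < √(a ^ 2 - t ^ 2) := sqrt_pos.mpr hpos
  have hsq : HasDerivAt (fun u ↦ √(a ^ 2 - u ^ 2)) (-(2 * t) / (2 * √(a ^ 2 - t ^ 2))) t := by
    refine HasDerivAt.sqrt ?_ hpos.ne'
    simpa using (hasDerivAt_pow 2 t).const_sub (a ^ 2)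
  refine ((((hasDerivAt_id' t).const_mul c).fun_div hsq hs.ne').arctan).congr_deriv ?_
  field_simp
  rw [sq_sqrt hpos.le]
  ring

lemma hasDerivAt_sqrt_mul_arctan_sub_arctan {a t : ℝ} (ht : t ^ 2 < a ^ 2) :
    HasDerivAt (fun u ↦ √(a ^ 2 + 1) * arctan (√(a ^ 2 + 1) * u / √(a ^ 2 - u ^ 2))
        - arctan (u / √(a ^ 2 - u ^ 2)))
      (√(a ^ 2 - t ^ 2) / (1 + t ^ 2)) t := by
  have hc := (hasDerivAt_arctan_mul_div_sqrt_sq_sub_sq (c := √(a ^ 2 + 1)) ht).const_mul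
    √(a ^ 2 + 1)
  have h1 := hasDerivAt_arctan_mul_div_sqrt_sq_sub_sq (c := 1) ht
  simp only [one_mul] at h1
  refine (hc.fun_sub h1).congr_deriv ?_
  have hpos : 0 < a ^ 2 - t ^ 2 := sub_pos.mpr ht
  have ha : a ≠ 0 := by rintro rfl; nlinarith
  have hs : 0 < √(a ^ 2 - t ^ 2) := sqrt_pos.mpr hpos
  rw [← mul_div_assoc, ← mul_assoc, ← sq, sq_sqrt (by positivity)]
  field_simp
  rw [sq_sqrt hpos.le]
  ring

theorem hFun_hasDerivAt (μ a : ℝ) :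
    ∀ ψ ∈ Set.Ioo (-Real.arctan a) (Real.arctan a),
      HasDerivAt (hFun μ a) (μ * Real.sqrt (a ^ 2 - Real.tan ψ ^ 2)) ψ := by
  intro ψ hψ
  have hG := hasDerivAt_sqrt_mul_arctan_sub_arctan (sq_tan_lt_sq_of_mem_Ioo_arctan hψ)
  have h := (hG.comp ψ
    (hasDerivAt_tan_one_add_tan_sq (mem_Ioo_neg_pi_div_two_of_mem_Ioo_arctan hψ))).const_mul μ
  rwa [div_mul_cancel₀ _ (by positivity)] at h
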